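/- If every graph in a class closed under edge deletion with the property 'K3-free, maximum degree at most 4, and no edge joins two vertices of degree at least 3' is considered, then any minimal non-edge-partitionable counterexample G in this class has every edge adjacent to at least 3 other edges; in particular, every edge of G is incident to a vertex of degree at least 3. -/

import Mathlib

open SimpleGraph

variable {V : Type*}

/-- A graph is a star forest iff it has no path on four vertices as a subgraph and
no triangle: every connected component is a star. -/
def IsStarForest {W : Type*} (H : SimpleGraph W) : Prop :=
  (∀ a b c d : W, H.Adj a b → H.Adj b c → H.Adj c d → a = c ∨ b = d ∨ a = d) ∧
    H.CliqueFree 3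

/-- A graph is edge-partitionable if its edges can be coloured red and blue so that
the blue edges form a star forest and every vertex is incident to at most two
red edges. -/
def EdgePartitionable {W : Type*} (G : SimpleGraph W) : Prop :=
  ∃ Bl : SimpleGraph W, Bl ≤ G ∧ IsStarForest Bl ∧
    ∀ v, {u | G.Adj v u ∧ ¬Bl.Adj v u}.ncard ≤ 2

/-- The class: triangle-free graphs of maximum degree at most `4` in which no edge
joins two vertices of degree at least `3`. -/
def InClass (G : SimpleGraph V) : Prop :=
  G.CliqueFree 3 ∧ (∀ v, (G.neighborSet v).ncard ≤ 4) ∧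
    ∀ u v, G.Adj u v → (G.neighborSet u).ncard ≤ 2 ∨ (G.neighborSet v).ncard ≤ 2

/-!
Let `uv` be an edge meeting at most two other edges. The graph `G \ uv` stays in the class and
has fewer edges, so by minimality it has an edge-partition. Colour `uv` red unless one of its ends
already carries two red edges; in that case these are all the edges at that end and the other end
is a leaf, so no blue edge meets `uv` and it can be added to the blue star forest as a new star.
Since the edges adjacent to `uv` number `deg u + deg v - 2`, both claims follow.
-/

namespace SimpleGraph

variable {G : SimpleGraph V} {u v w : V}

lemma ncard_incidenceSet (G : SimpleGraph V) (v : V) :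
    (G.incidenceSet v).ncard = (G.neighborSet v).ncard := by
  classical exact Nat.card_congr (G.incidenceSetEquivNeighborSet v)

lemma ncard_edges_adjacent_add_two [Finite V] (huv : G.Adj u v) :
    {e ∈ G.edgeSet | e ≠ s(u, v) ∧ (u ∈ e ∨ v ∈ e)}.ncard + 2 =
      (G.neighborSet u).ncard + (G.neighborSet v).ncard := by
  have hset : {e ∈ G.edgeSet | e ≠ s(u, v) ∧ (u ∈ e ∨ v ∈ e)} =
      (G.incidenceSet u ∪ G.incidenceSet v) \ {s(u, v)} := by
    ext e
    simp only [incidenceSet, Set.mem_sep_iff, Set.mem_sdiff, Set.mem_union,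
      Set.mem_singleton_iff]
    tauto
  have hmem : s(u, v) ∈ G.incidenceSet u ∪ G.incidenceSet v :=
    Or.inl ((G.mem_incidenceSet u v).2 huv)
  rw [hset, ← ncard_incidenceSet, ← ncard_incidenceSet,
    ← Set.ncard_union_add_ncard_inter, G.incidenceSet_inter_incidenceSet_of_adj huv,
    Set.ncard_singleton, ← Set.ncard_sdiff_singleton_add_one hmem]

lemma neighborSet_edge_left (huv : u ≠ v) : (edge u v).neighborSet u = {v} := by
  ext x
  simp only [mem_neighborSet, edge_adj, Set.mem_singleton_iff]
  grind

lemma neighborSet_edge_of_ne_of_ne (hu : w ≠ u) (hv : w ≠ v) :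
    (edge u v).neighborSet w = ∅ := by
  ext x
  simp [edge_adj, hu, hv]

lemma ncard_neighborSet_sdiff_edge_add_one [Finite V] (huv : G.Adj u v) :
    ((G \ edge u v).neighborSet u).ncard + 1 = (G.neighborSet u).ncard := by
  rw [neighborSet_sdiff, neighborSet_edge_left huv.ne]
  exact Set.ncard_sdiff_singleton_add_one huv

lemma ncard_neighborSet_edge_le_one : ((edge u v).neighborSet w).ncard ≤ 1 := by
  have hsub : ((edge u v).neighborSet w).Subsingleton := by
    intro a ha b hb
    simp only [mem_neighborSet, edge_adj] at ha hb
    grind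
  exact (Set.ncard_le_one_iff hsub.finite).2 (hsub · ·)

end SimpleGraph

open SimpleGraph

lemma InClass.anti [Finite V] {G H : SimpleGraph V} (hG : InClass G) (hHG : H ≤ G) :
    InClass H := by
  have hdeg : ∀ v, (H.neighborSet v).ncard ≤ (G.neighborSet v).ncard :=
    fun v => Set.ncard_le_ncard (neighborSet_mono hHG v)
  obtain ⟨hK3, hmax, hlow⟩ := hG
  refine ⟨hK3.anti hHG, fun v => (hdeg v).trans (hmax v), fun u v huv => ?_⟩
  rcases hlow u v (hHG huv) with h | h
  · exact Or.inl ((hdeg u).trans h)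
  · exact Or.inr ((hdeg v).trans h)

lemma IsStarForest.sup_edge {H : SimpleGraph V} {u v : V} (hH : IsStarForest H)
    (hu : ∀ x, ¬H.Adj u x) (hv : ∀ x, ¬H.Adj v x) : IsStarForest (H ⊔ edge u v) := by
  have hu' : ∀ x, ¬H.Adj x u := fun x h => hu x h.symm
  have hv' : ∀ x, ¬H.Adj x v := fun x h => hv x h.symm
  refine ⟨fun a b c d hab hbc hcd => ?_, fun t ht => ?_⟩
  · simp only [sup_adj, edge_adj] at hab hbc hcd
    have := hH.1 a b c d
    grind
  · classical
    obtain ⟨a, b, c, hab, hac, hbc, rfl⟩ := is3Clique_iff.1 ht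
    simp only [sup_adj, edge_adj] at hab hac hbc
    refine hH.2 {a, b, c} (is3Clique_iff.2 ⟨a, b, c, ?_, ?_, ?_, rfl⟩) <;> grind

/-- `B` is the blue graph and `G \ B` the red one. -/
structure IsEdgePartition (G B : SimpleGraph V) : Prop where
  le : B ≤ G
  isStarForest : IsStarForest B
  ncard_red_le : ∀ v, ((G \ B).neighborSet v).ncard ≤ 2

lemma edgePartitionable_iff {G : SimpleGraph V} :
    EdgePartitionable G ↔ ∃ B, IsEdgePartition G B :=
  ⟨fun ⟨B, hle, hB, hred⟩ => ⟨B, hle, hB, hred⟩, fun ⟨B, hB⟩ => ⟨B, hB.1, hB.2, hB.3⟩⟩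

namespace IsEdgePartition

variable [Finite V] {H B : SimpleGraph V} {u v : V}

lemma sup_edge_red (hB : IsEdgePartition H B) (hu : ((H \ B).neighborSet u).ncard ≤ 1)
    (hv : ((H \ B).neighborSet v).ncard ≤ 1) : IsEdgePartition (H ⊔ edge u v) B := by
  refine ⟨hB.le.trans le_sup_left, hB.isStarForest, fun w => ?_⟩
  have hsub : ((H ⊔ edge u v) \ B).neighborSet w ⊆
      (H \ B).neighborSet w ∪ (edge u v).neighborSet w := by
    rw [sup_sdiff]
    exact neighborSet_mono (sup_le_sup_left sdiff_le _) w
  by_cases hw : w = u ∨ w = v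
  · have hw_red : ((H \ B).neighborSet w).ncard ≤ 1 := by rcases hw with rfl | rfl <;> assumption
    calc (((H ⊔ edge u v) \ B).neighborSet w).ncard
        ≤ ((H \ B).neighborSet w ∪ (edge u v).neighborSet w).ncard := Set.ncard_le_ncard hsub
      _ ≤ ((H \ B).neighborSet w).ncard + ((edge u v).neighborSet w).ncard :=
          Set.ncard_union_le _ _
      _ ≤ 2 := add_le_add hw_red ncard_neighborSet_edge_le_one
  · rw [not_or] at hw
    rw [neighborSet_edge_of_ne_of_ne hw.1 hw.2, Set.union_empty] at hsub
    exact (Set.ncard_le_ncard hsub).trans (hB.ncard_red_le w)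

lemma sup_edge_blue (hB : IsEdgePartition H B) (hu : ∀ x, ¬B.Adj u x) (hv : ∀ x, ¬B.Adj v x) :
    IsEdgePartition (H ⊔ edge u v) (B ⊔ edge u v) := by
  refine ⟨sup_le_sup_right hB.le _, hB.isStarForest.sup_edge hu hv, fun w => ?_⟩
  have hred : (H ⊔ edge u v) \ (B ⊔ edge u v) ≤ H \ B := by
    intro a b
    simp only [sdiff_adj, sup_adj]
    tauto
  exact (Set.ncard_le_ncard (neighborSet_mono hred w)).trans (hB.ncard_red_le w)

lemma not_adj_of_ncard_neighborSet_le (hB : IsEdgePartition H B)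
    (hw : (H.neighborSet w).ncard ≤ ((H \ B).neighborSet w).ncard) (x : V) : ¬B.Adj w x := by
  have hall : (H \ B).neighborSet w = H.neighborSet w :=
    Set.eq_of_subset_of_ncard_le Set.sdiff_subset hw
  intro hx
  have hred : x ∈ (H \ B).neighborSet w := hall ▸ hB.le hx
  exact hred.2 hx

end IsEdgePartition

namespace EdgePartitionable

variable [Finite V] {G H : SimpleGraph V} {u v : V}

lemma sup_edge (hH : EdgePartitionable H)
    (hdeg : (H.neighborSet u).ncard + (H.neighborSet v).ncard ≤ 2) :
    EdgePartitionable (H ⊔ edge u v) := by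
  obtain ⟨B, hB⟩ := edgePartitionable_iff.1 hH
  have hu : ((H \ B).neighborSet u).ncard ≤ (H.neighborSet u).ncard :=
    Set.ncard_le_ncard Set.sdiff_subset
  have hv : ((H \ B).neighborSet v).ncard ≤ (H.neighborSet v).ncard :=
    Set.ncard_le_ncard Set.sdiff_subset
  rw [edgePartitionable_iff]
  by_cases hred : ((H \ B).neighborSet u).ncard ≤ 1 ∧ ((H \ B).neighborSet v).ncard ≤ 1
  · exact ⟨B, hB.sup_edge_red hred.1 hred.2⟩
  · exact ⟨B ⊔ edge u v, hB.sup_edge_blue (hB.not_adj_of_ncard_neighborSet_le (by omega))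
      (hB.not_adj_of_ncard_neighborSet_le (by omega))⟩

lemma of_sdiff_edge (huv : G.Adj u v)
    (hdeg : (G.neighborSet u).ncard + (G.neighborSet v).ncard ≤ 4)
    (h : EdgePartitionable (G \ edge u v)) : EdgePartitionable G := by
  have hu := ncard_neighborSet_sdiff_edge_add_one huv
  have hv := ncard_neighborSet_sdiff_edge_add_one huv.symm
  rw [edge_comm] at hv
  rw [← sdiff_sup_cancel ((edge_le_iff G).2 (Or.inr huv))]
  exact h.sup_edge (by omega)

end EdgePartitionable

theorem stmt19 [Fintype V] (G : SimpleGraph V)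
    (hG : InClass G) (hnot : ¬EdgePartitionable G)
    (hmin : ∀ H : SimpleGraph V, InClass H →
      H.edgeSet.ncard < G.edgeSet.ncard → EdgePartitionable H) :
    (∀ u v, G.Adj u v →
      3 ≤ {e ∈ G.edgeSet | e ≠ s(u, v) ∧ (u ∈ e ∨ v ∈ e)}.ncard) ∧
    (∀ u v, G.Adj u v →
      3 ≤ (G.neighborSet u).ncard ∨ 3 ≤ (G.neighborSet v).ncard) := by
  have hdeg : ∀ u v, G.Adj u v → 5 ≤ (G.neighborSet u).ncard + (G.neighborSet v).ncard := by
    intro u v huv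
    by_contra! hle
    refine hnot (.of_sdiff_edge huv (by omega) (hmin _ (hG.anti sdiff_le) ?_))
    rw [edgeSet_sdiff, edgeSet_edge_of_ne huv.ne]
    exact Set.ncard_sdiff_singleton_lt_of_mem huv
  refine ⟨fun u v huv => ?_, fun u v huv => ?_⟩ <;>
  · have := ncard_edges_adjacent_add_two huv
    have := hdeg u v huv
    omega
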